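/- Let G be a finite connected vertex-transitive simple graph. Then C_G = C_{|·|}, where |·| is the counting measure; that is, the counting measure is a doubling minimizer: inf_μ C_μ = sup_{v,r} |B(v,2r)|/|B(v,r)|. -/
import Mathlib


/-- The closed ball of center `v` and real radius `r` in the path metric of `G`. -/
noncomputable def graphBall {V : Type*} [Fintype V] (G : SimpleGraph V) (v : V) (r : ℝ) :
    Finset V :=
  Finset.univ.filter (fun w => (G.dist v w : ℝ) ≤ r)

section Aux

variable {V : Type*} [Fintype V] (G : SimpleGraph V)

lemma mem_graphBall {v w : V} {r : ℝ} :
    w ∈ graphBall G v r ↔ (G.dist v w : ℝ) ≤ r := by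
  simp [graphBall]

lemma self_mem_graphBall {v : V} {r : ℝ} (hr : 0 ≤ r) : v ∈ graphBall G v r := by
  simp [graphBall, SimpleGraph.dist_self, hr]

lemma dist_iso (hG : G.Connected) (σ : G ≃g G) (v w : V) :
    G.dist (σ v) (σ w) = G.dist v w := by
  have key : ∀ (τ : G ≃g G) (a b : V), G.dist (τ a) (τ b) ≤ G.dist a b := by
    intro τ a b
    obtain ⟨p, hp⟩ := hG.exists_walk_length_eq_dist a b
    calc G.dist (τ a) (τ b) ≤ (p.map τ.toHom).length := SimpleGraph.dist_le _
      _ = G.dist a b := by rw [SimpleGraph.Walk.length_map, hp]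
  refine le_antisymm (key σ v w) ?_
  have := key σ.symm (σ v) (σ w)
  simpa using this

lemma card_graphBall (hG : G.Connected)
    (htrans : ∀ v w : V, ∃ σ : G ≃g G, σ v = w) (v w : V) (r : ℝ) :
    (graphBall G v r).card = (graphBall G w r).card := by
  obtain ⟨σ, hσ⟩ := htrans v w
  apply Finset.card_bij' (fun a _ => σ a) (fun b _ => σ.symm b)
  · intro a ha
    rw [mem_graphBall] at ha ⊢
    rwa [← hσ, dist_iso G hG]
  · intro b hb
    rw [mem_graphBall] at hb ⊢
    have h1 : σ (σ.symm b) = b := σ.apply_symm_apply b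
    rw [← dist_iso G hG σ v (σ.symm b), h1, hσ]
    exact hb
  · intro a _; simp
  · intro b _; simp

lemma sum_sum_ball (μ : V → ℝ) (r : ℝ) (c : ℕ)
    (hc : ∀ w, (graphBall G w r).card = c) :
    ∑ v : V, ∑ w ∈ graphBall G v r, μ w = (c : ℝ) * ∑ w : V, μ w := by
  classical
  have h1 : ∀ v : V, ∑ w ∈ graphBall G v r, μ w
      = ∑ w : V, if (G.dist v w : ℝ) ≤ r then μ w else 0 := by
    intro v; rw [graphBall, Finset.sum_filter]
  simp_rw [h1]
  rw [Finset.sum_comm]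
  have h2 : ∀ w : V, (∑ v : V, if (G.dist v w : ℝ) ≤ r then μ w else 0)
      = (c : ℝ) * μ w := by
    intro w
    rw [← Finset.sum_filter, Finset.sum_const, nsmul_eq_mul]
    congr 1
    have : (Finset.univ.filter fun v => (G.dist v w : ℝ) ≤ r) = graphBall G w r := by
      apply Finset.filter_congr
      intro v _
      simp [SimpleGraph.dist_comm]
    rw [this, hc w]
  simp_rw [h2]
  rw [← Finset.mul_sum]

end Aux

/-- for a finite connected vertex-transitive graph, the counting measure
is a doubling minimizer: `C_G = inf_μ C_μ` equals `sup_{v,r} |B(v,2r)|/|B(v,r)|`. -/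
theorem stmt_18 {V : Type*} [Fintype V] (G : SimpleGraph V) (hG : G.Connected)
    (htrans : ∀ v w : V, ∃ σ : G ≃g G, σ v = w) :
    (⨅ μ : {f : V → ℝ // ∀ v, 0 < f v},
        ⨆ v : V, ⨆ r : {r : ℝ // 0 ≤ r},
          (∑ w ∈ graphBall G v (2 * (r : ℝ)), μ.1 w) /
            (∑ w ∈ graphBall G v (r : ℝ), μ.1 w)) =
      ⨆ v : V, ⨆ r : {r : ℝ // 0 ≤ r},
        ((graphBall G v (2 * (r : ℝ))).card : ℝ) / ((graphBall G v (r : ℝ)).card : ℝ) := by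
  classical
  have hne : Nonempty V := hG.nonempty
  have hrne : Nonempty {r : ℝ // 0 ≤ r} := ⟨⟨0, le_refl 0⟩⟩
  -- positivity of ball sums
  have hsumpos : ∀ (μ : {f : V → ℝ // ∀ v, 0 < f v}) (v : V) (r : ℝ), 0 ≤ r →
      0 < ∑ w ∈ graphBall G v r, μ.1 w := by
    intro μ v r hr
    exact Finset.sum_pos (fun w _ => μ.2 w) ⟨v, self_mem_graphBall G hr⟩
  -- the function
  set F : {f : V → ℝ // ∀ v, 0 < f v} → V → {r : ℝ // 0 ≤ r} → ℝ := fun μ v r =>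
    (∑ w ∈ graphBall G v (2 * (r : ℝ)), μ.1 w) / (∑ w ∈ graphBall G v (r : ℝ), μ.1 w)
  -- uniform bound for fixed μ
  have hbound : ∀ (μ : {f : V → ℝ // ∀ v, 0 < f v}) (v : V) (r : {r : ℝ // 0 ≤ r}),
      F μ v r ≤ (∑ w : V, μ.1 w) / (Finset.univ.inf' Finset.univ_nonempty μ.1) := by
    intro μ v r
    have hm : 0 < Finset.univ.inf' Finset.univ_nonempty μ.1 := by
      rw [Finset.lt_inf'_iff]
      exact fun b _ => μ.2 b
    refine div_le_div₀ (Finset.sum_nonneg fun w _ => (μ.2 w).le) ?_ hm ?_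
    · exact Finset.sum_le_sum_of_subset_of_nonneg (Finset.subset_univ _)
        (fun w _ _ => (μ.2 w).le)
    · calc Finset.univ.inf' Finset.univ_nonempty μ.1 ≤ μ.1 v :=
            Finset.inf'_le _ (Finset.mem_univ v)
        _ ≤ ∑ w ∈ graphBall G v (r : ℝ), μ.1 w :=
            Finset.single_le_sum (fun w _ => (μ.2 w).le) (self_mem_graphBall G r.2)
  have hbddInner : ∀ (μ : {f : V → ℝ // ∀ v, 0 < f v}) (v : V),
      BddAbove (Set.range fun r : {r : ℝ // 0 ≤ r} => F μ v r) := by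
    intro μ v
    refine ⟨(∑ w : V, μ.1 w) / (Finset.univ.inf' Finset.univ_nonempty μ.1), ?_⟩
    rintro x ⟨r, rfl⟩
    exact hbound μ v r
  have hbddOuter : ∀ (μ : {f : V → ℝ // ∀ v, 0 < f v}),
      BddAbove (Set.range fun v : V => ⨆ r : {r : ℝ // 0 ≤ r}, F μ v r) := by
    intro μ
    refine ⟨(∑ w : V, μ.1 w) / (Finset.univ.inf' Finset.univ_nonempty μ.1), ?_⟩
    rintro x ⟨v, rfl⟩
    exact ciSup_le fun r => hbound μ v r
  refine le_antisymm ?_ ?_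
  · -- inf ≤ value at counting measure
    have hμ0 : (⨆ v : V, ⨆ r : {r : ℝ // 0 ≤ r},
        (∑ w ∈ graphBall G v (2 * (r : ℝ)), (fun _ : V => (1:ℝ)) w) /
          (∑ w ∈ graphBall G v (r : ℝ), (fun _ : V => (1:ℝ)) w)) =
        ⨆ v : V, ⨆ r : {r : ℝ // 0 ≤ r},
          ((graphBall G v (2 * (r : ℝ))).card : ℝ) / ((graphBall G v (r : ℝ)).card : ℝ) := by
      simp [Finset.sum_const]
    calc (⨅ μ : {f : V → ℝ // ∀ v, 0 < f v}, ⨆ v : V, ⨆ r : {r : ℝ // 0 ≤ r}, F μ v r)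
        ≤ ⨆ v : V, ⨆ r : {r : ℝ // 0 ≤ r}, F ⟨fun _ => (1:ℝ), fun _ => one_pos⟩ v r := by
          apply ciInf_le
          refine ⟨0, ?_⟩
          rintro x ⟨μ, rfl⟩
          refine Real.iSup_nonneg fun v => Real.iSup_nonneg fun r => ?_
          exact div_nonneg (Finset.sum_nonneg fun w _ => (μ.2 w).le)
            (Finset.sum_nonneg fun w _ => (μ.2 w).le)
      _ = _ := hμ0
  · -- counting value ≤ inf
    have : Nonempty {f : V → ℝ // ∀ v, 0 < f v} := ⟨⟨fun _ => 1, fun _ => one_pos⟩⟩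
    refine le_ciInf fun μ => ?_
    refine ciSup_le fun v => ciSup_le fun r => ?_
    -- counting ratio at (v, r)
    set c1 : ℕ := (graphBall G v (r : ℝ)).card
    set c2 : ℕ := (graphBall G v (2 * (r : ℝ))).card
    have hc1 : ∀ w, (graphBall G w (r : ℝ)).card = c1 :=
      fun w => card_graphBall G hG htrans w v _
    have hc2 : ∀ w, (graphBall G w (2 * (r : ℝ))).card = c2 :=
      fun w => card_graphBall G hG htrans w v _
    have h2r : (0:ℝ) ≤ 2 * (r : ℝ) := by linarith [r.2]
    have hc1pos : 0 < c1 :=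
      Finset.card_pos.mpr ⟨v, self_mem_graphBall G r.2⟩
    -- averaging
    have hsum1 : ∑ u : V, ∑ w ∈ graphBall G u (r : ℝ), μ.1 w = (c1 : ℝ) * ∑ w : V, μ.1 w :=
      sum_sum_ball G μ.1 _ c1 hc1
    have hsum2 : ∑ u : V, ∑ w ∈ graphBall G u (2 * (r : ℝ)), μ.1 w
        = (c2 : ℝ) * ∑ w : V, μ.1 w := sum_sum_ball G μ.1 _ c2 hc2
    have hkey : ∑ u : V, (c2 : ℝ) * ∑ w ∈ graphBall G u (r : ℝ), μ.1 w
        ≤ ∑ u : V, (c1 : ℝ) * ∑ w ∈ graphBall G u (2 * (r : ℝ)), μ.1 w := by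
      rw [← Finset.mul_sum, ← Finset.mul_sum, hsum1, hsum2]
      ring_nf
      exact le_refl _
    obtain ⟨u, _, hu⟩ := Finset.exists_le_of_sum_le (Finset.univ_nonempty) hkey
    -- counting ratio ≤ F μ u r
    have hstep : (c2 : ℝ) / (c1 : ℝ) ≤ F μ u r := by
      rw [div_le_div_iff₀ (by exact_mod_cast hc1pos) (hsumpos μ u _ r.2)]
      calc (c2 : ℝ) * ∑ w ∈ graphBall G u (r : ℝ), μ.1 w
          ≤ (c1 : ℝ) * ∑ w ∈ graphBall G u (2 * (r : ℝ)), μ.1 w := hu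
        _ = (∑ w ∈ graphBall G u (2 * (r : ℝ)), μ.1 w) * (c1 : ℝ) := by ring
    calc ((graphBall G v (2 * (r : ℝ))).card : ℝ) / ((graphBall G v (r : ℝ)).card : ℝ)
        = (c2 : ℝ) / (c1 : ℝ) := rfl
      _ ≤ F μ u r := hstep
      _ ≤ ⨆ r' : {r : ℝ // 0 ≤ r}, F μ u r' := le_ciSup (hbddInner μ u) r
      _ ≤ ⨆ v' : V, ⨆ r' : {r : ℝ // 0 ≤ r}, F μ v' r' := le_ciSup (hbddOuter μ) u
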